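/- arXiv:2310.03382 — 6 statements merged into one kernel-verified Lean document; each statement's English description precedes it below -/
import Mathlib

section
/- There exists a 7-progression-free subset S of F_7^3 with |S| ≥ 225 (i.e., r_7(F_7^3) ≥ 225). -/
/-- A subset `S` of `F_p^n` is `k`-progression-free if there are no `a, d` with `d ≠ 0`
such that `a + i • d ∈ S` for all `i ∈ {0, …, k-1}`. -/
def ProgFree (p n k : ℕ) (S : Finset (Fin n → ZMod p)) : Prop :=
  ¬ ∃ a d : Fin n → ZMod p, d ≠ 0 ∧ ∀ i : ℕ, i < k → a + (i : ZMod p) • d ∈ S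

/-! Over `F_p` the `p`-term progression with difference `d` is the whole affine line in
direction `d`, and rescaling `d` keeps it inside the set. So it suffices that no line whose
direction has first nonzero coordinate `1` (there are `57` such directions in `F_7^3`) lies
in the set, and this is checked by computation for the set of points `(x, y, z)` such that
bit `49x + 7y + z` of `mask` is set. -/

theorem add_smul_smul_mem_of_forall_add_smul_mem {p : ℕ} [NeZero p] {V : Type*}
    [AddCommGroup V] [Module (ZMod p) V] {S : Set V} {a d : V}
    (h : ∀ i : ℕ, i < p → a + (i : ZMod p) • d ∈ S) (c : ZMod p) (i : ℕ) :
    a + (i : ZMod p) • c • d ∈ S := by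
  have := h ((i : ZMod p) * c).val (ZMod.val_lt _)
  rwa [ZMod.natCast_zmod_val, mul_smul] at this

def IsNormalized {K : Type*} [Zero K] [One K] {n : ℕ} (d : Fin n → K) : Prop :=
  ∃ j, (∀ k < j, d k = 0) ∧ d j = 1

theorem exists_isNormalized_smul {K : Type*} [Field K] {n : ℕ} {d : Fin n → K} (hd : d ≠ 0) :
    ∃ c : K, IsNormalized (c • d) := by
  obtain ⟨j, hj, hmin⟩ := wellFounded_lt.has_min {j | d j ≠ 0} (Function.ne_iff.mp hd)
  refine ⟨(d j)⁻¹, j, fun k hk => ?_, inv_mul_cancel₀ hj⟩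
  have hdk : d k = 0 := not_not.mp fun hdk => hmin k hdk hk
  simp [hdk]

theorem progFree_of_forall_isNormalized {p n : ℕ} [Fact p.Prime] {S : Finset (Fin n → ZMod p)}
    (h : ∀ a d : Fin n → ZMod p, IsNormalized d → ∃ i < p, a + (i : ZMod p) • d ∉ S) :
    ProgFree p n p S := by
  rintro ⟨a, d, hd, hline⟩
  obtain ⟨c, hc⟩ := exists_isNormalized_smul hd
  obtain ⟨i, hi, hout⟩ := h a (c • d) hc
  exact hout (add_smul_smul_mem_of_forall_add_smul_mem (S := (S : Set (Fin n → ZMod p)))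
    hline c i)

theorem ZMod.val_add_natCast_mul {p : ℕ} [NeZero p] (x y : ZMod p) (i : ℕ) :
    (x + i * y).val = (x.val + i * y.val) % p := by
  rw [← ZMod.val_natCast]
  push_cast [ZMod.natCast_val, ZMod.cast_id]
  rfl

def mask : ℕ :=
  87768775435273207963849864868679463834401060940581719300459475321510444750448872698891951152047832813

def cubeIndex (x y z : ℕ) : ℕ := x % 7 * 49 + y % 7 * 7 + z % 7

def lineFreeSet : Finset (Fin 3 → ZMod 7) :=
  Finset.univ.filter fun v => mask.testBit (cubeIndex (v 0).val (v 1).val (v 2).val)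

theorem card_lineFreeSet : lineFreeSet.card = 225 := by decide +kernel

def isNormalizedNat (d₀ d₁ d₂ : ℕ) : Bool :=
  d₀ == 1 || (d₀ == 0 && d₁ == 1) || (d₀ == 0 && d₁ == 0 && d₂ == 1)

def normalizedLinesLeaveMask : Bool :=
  (List.range 7).all fun d₀ => (List.range 7).all fun d₁ => (List.range 7).all fun d₂ =>
    !isNormalizedNat d₀ d₁ d₂ ||
      (List.range 7).all fun a₀ => (List.range 7).all fun a₁ => (List.range 7).all fun a₂ =>
        (List.range 7).any fun i =>
          !mask.testBit (cubeIndex (a₀ + i * d₀) (a₁ + i * d₁) (a₂ + i * d₂))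

theorem normalizedLinesLeaveMask_eq_true : normalizedLinesLeaveMask = true := by decide +kernel

theorem exists_not_testBit_of_isNormalizedNat {d₀ d₁ d₂ a₀ a₁ a₂ : ℕ} (hd₀ : d₀ < 7)
    (hd₁ : d₁ < 7) (hd₂ : d₂ < 7) (ha₀ : a₀ < 7) (ha₁ : a₁ < 7) (ha₂ : a₂ < 7)
    (hd : isNormalizedNat d₀ d₁ d₂ = true) :
    ∃ i < 7, mask.testBit (cubeIndex (a₀ + i * d₀) (a₁ + i * d₁) (a₂ + i * d₂)) = false := by
  have h := normalizedLinesLeaveMask_eq_true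
  simp only [normalizedLinesLeaveMask, List.all_eq_true, List.any_eq_true, List.mem_range,
    Bool.or_eq_true, Bool.not_eq_true'] at h
  exact ((h d₀ hd₀ d₁ hd₁ d₂ hd₂).resolve_left (by simp [hd])) a₀ ha₀ a₁ ha₁ a₂ ha₂

theorem isNormalizedNat_val_of_isNormalized {d : Fin 3 → ZMod 7} (hd : IsNormalized d) :
    isNormalizedNat (d 0).val (d 1).val (d 2).val = true := by
  obtain ⟨j, hlt, hj⟩ := hd
  fin_cases j <;> simp_all [isNormalizedNat, Fin.forall_fin_succ, ZMod.val_one_eq_one_mod]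

theorem mem_lineFreeSet_add_smul {a d : Fin 3 → ZMod 7} {i : ℕ} :
    a + (i : ZMod 7) • d ∈ lineFreeSet ↔ mask.testBit (cubeIndex ((a 0).val + i * (d 0).val)
      ((a 1).val + i * (d 1).val) ((a 2).val + i * (d 2).val)) = true := by
  rw [lineFreeSet, Finset.mem_filter]
  simp only [Finset.mem_univ, true_and, Pi.add_apply, Pi.smul_apply, smul_eq_mul,
    ZMod.val_add_natCast_mul, cubeIndex, Nat.mod_mod]

theorem progFree_lineFreeSet : ProgFree 7 3 7 lineFreeSet := by
  have : Fact (Nat.Prime 7) := ⟨by norm_num⟩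
  refine progFree_of_forall_isNormalized fun a d hd => ?_
  obtain ⟨i, hi, hout⟩ := exists_not_testBit_of_isNormalizedNat (ZMod.val_lt (d 0))
    (ZMod.val_lt (d 1)) (ZMod.val_lt (d 2)) (ZMod.val_lt (a 0)) (ZMod.val_lt (a 1))
    (ZMod.val_lt (a 2)) (isNormalizedNat_val_of_isNormalized hd)
  exact ⟨i, hi, by simp [mem_lineFreeSet_add_smul, hout]⟩

theorem stmt_2 :
    ∃ S : Finset (Fin 3 → ZMod 7), ProgFree 7 3 7 S ∧ 225 ≤ S.card :=
  ⟨lineFreeSet, progFree_lineFreeSet, card_lineFreeSet.ge⟩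
end

section
/- Let p ≥ 3 be a prime. Then r_p(F_p^3) ≤ ( 2p^5 - 4p^4 + 2p^3 - p^2 + 4p - 2 - √( 8p^6 - 20p^5 + 17p^4 - 12p^3 + 20p^2 - 16p + 4 ) ) / (2p^2), where the square root is the real square root; that is, every p-progression-free subset S of F_p^3 satisfies |S| ≤ that quantity. -/
/-!
A `p`-progression-free set `S ⊆ 𝔽_p³` is one whose complement `T` meets every line. By
Jamison's polynomial bound, `T` meets every affine plane of `𝔽_q³` in at least `m = 2q - 1`
points. So for each direction `g ≠ 0` the sizes `A_c` of the `q` slices `T ∩ {g ⬝ᵥ v = c}`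
lie in `[m, |T| - (q - 1) m]`, which forces `∑_c A_c² ≤ (|T| - (q - 1) m)² + (q - 1) m²`.
On the other hand `∑_g ∑_c A_c²` counts the triples `(g, u, v)` with `u, v ∈ T` and
`g ⬝ᵥ u = g ⬝ᵥ v`, i.e. it equals `|T| q³ + |T| (|T| - 1) q²`. Comparing the two gives a
quadratic inequality in `|S| = q³ - |T|`, and `|T| ≥ q m` puts `|S|` below the smaller root.
-/

open Finset

theorem Finset.sum_sq_le_of_forall_mem_Icc {ι R : Type*} [CommRing R] [LinearOrder R]
    [IsStrictOrderedRing R] {s : Finset ι} {a : ι → R} {m M : R}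
    (h : ∀ i ∈ s, a i ∈ Set.Icc m M) :
    ∑ i ∈ s, a i ^ 2 ≤ (m + M) * ∑ i ∈ s, a i - #s * (m * M) := by
  have hnonneg : 0 ≤ ∑ i ∈ s, (a i - m) * (M - a i) :=
    sum_nonneg fun i hi => mul_nonneg (sub_nonneg.2 (h i hi).1) (sub_nonneg.2 (h i hi).2)
  have hexpand : ∑ i ∈ s, (a i - m) * (M - a i)
      = (m + M) * ∑ i ∈ s, a i - #s * (m * M) - ∑ i ∈ s, a i ^ 2 := by
    simp only [mul_sum, ← nsmul_eq_mul, ← sum_const, ← sum_sub_distrib]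
    exact sum_congr rfl fun i _ => by ring
  linarith

theorem Finset.sum_sq_card_filter_eq {ι κ : Type*} [Fintype κ] [DecidableEq κ]
    (s : Finset ι) (f : ι → κ) :
    ∑ k, #{x ∈ s | f x = k} ^ 2 = ∑ x ∈ s, #{y ∈ s | f y = f x} := by
  simp_rw [sq, ← smul_eq_mul, ← sum_const]
  exact sum_fiberwise' s f fun k => #{y ∈ s | f y = k}

theorem le_sub_sqrt_of_quadratic_nonneg {a b c x : ℝ} (ha : 0 ≤ a)
    (hq : 0 ≤ a * x ^ 2 - b * x + c) (hx : 2 * a * x - b < √(b ^ 2 - 4 * a * c)) :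
    2 * a * x ≤ b - √(b ^ 2 - 4 * a * c) := by
  have hsq : b ^ 2 - 4 * a * c ≤ (2 * a * x - b) ^ 2 := by nlinarith [mul_nonneg ha hq]
  have habs := (Real.sqrt_le_sqrt hsq).trans_eq (Real.sqrt_sq_eq_abs _)
  rcases abs_cases (2 * a * x - b) with ⟨h, -⟩ | ⟨h, -⟩ <;> linarith

section DotProduct

variable {F : Type*} [Field F]

theorem dotProductEquiv_ne_zero {n : ℕ} {g : Fin n → F} (hg : g ≠ 0) :
    dotProductEquiv F (Fin n) g ≠ 0 :=
  (map_ne_zero_iff _ (dotProductEquiv F (Fin n)).injective).2 hg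

variable [Fintype F]

open MvPolynomial in
theorem jamison_lower_bound {n : ℕ} (U : Finset (Fin n → F)) (hU : U.Nonempty)
    (hmeet : ∀ y : Fin n → F, y ≠ 0 → ∀ c : F, ∃ x ∈ U, y ⬝ᵥ x = c) :
    n * (Fintype.card F - 1) + 1 ≤ #U := by
  classical
  obtain ⟨x₀, hx₀⟩ := hU
  by_contra! hlt
  -- `P` vanishes at every `y ≠ 0` but not at `0`, yet its degree is small enough for
  -- Chevalley–Warning to force `∑ y, P y = 0`.
  let P : MvPolynomial (Fin n) F := ∏ b ∈ U.erase x₀, (∑ k, (b k - x₀ k) • X k - 1)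
  have heval (y : Fin n → F) : eval y P = ∏ b ∈ U.erase x₀, ((b - x₀) ⬝ᵥ y - 1) := by
    simp [P, dotProduct, smul_eq_C_mul]
  have hP0 : eval 0 P ≠ 0 := by rw [heval]; simp
  have hPy (y : Fin n → F) (hy : y ≠ 0) : eval y P = 0 := by
    obtain ⟨b, hb, hby⟩ := hmeet y hy (y ⬝ᵥ x₀ + 1)
    have hbx : (b - x₀) ⬝ᵥ y = 1 := by
      rw [dotProduct_comm, dotProduct_sub, hby]; ring
    have hne : b ≠ x₀ := by rintro rfl; simp at hbx
    rw [heval]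
    exact prod_eq_zero (mem_erase.2 ⟨hne, hb⟩) (by rw [hbx, sub_self])
  have hfactor (b : Fin n → F) :
      (∑ k, (b k - x₀ k) • X k - 1 : MvPolynomial (Fin n) F).totalDegree ≤ 1 :=
    (totalDegree_sub_C_le _ 1).trans <| (totalDegree_finsetSum _ _).trans <|
      Finset.sup_le fun k _ => (totalDegree_smul_le _ _).trans (totalDegree_X k).le
  have hdeg : P.totalDegree < (Fintype.card F - 1) * Fintype.card (Fin n) := by
    calc P.totalDegree ≤ ∑ b ∈ U.erase x₀, 1 :=
          (totalDegree_finsetProd _ _).trans (sum_le_sum fun b _ => hfactor b)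
      _ < _ := by
          rw [sum_const, smul_eq_mul, mul_one, card_erase_of_mem hx₀, Fintype.card_fin, mul_comm]
          have := U.card_pos.2 ⟨x₀, hx₀⟩
          omega
  have hsum := sum_eval_eq_zero P hdeg
  rw [sum_eq_single_of_mem 0 (mem_univ _) fun y _ hy => hPy y hy] at hsum
  exact hP0 hsum

variable [DecidableEq F]

theorem card_filter_dotProduct_eq_zero {n : ℕ} {w : Fin n → F} (hw : w ≠ 0) :
    #{g : Fin n → F | g ⬝ᵥ w = 0} = Fintype.card F ^ (n - 1) := by
  classical
  let φ := dotProductEquiv F (Fin n) w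
  have hrank : Module.finrank F (LinearMap.ker φ) + 1 = n := by
    simpa using Module.Dual.finrank_ker_add_one_of_ne_zero (dotProductEquiv_ne_zero hw)
  have hker : #{g : Fin n → F | g ⬝ᵥ w = 0} = Fintype.card (LinearMap.ker φ) := by
    rw [Fintype.card_subtype]; simp [φ, dotProduct_comm]
  rw [hker, Module.card_eq_pow_finrank (K := F)]
  congr 1
  omega

theorem card_filter_dotProduct_eq_dotProduct {n : ℕ} (u v : Fin n → F) :
    #{g : Fin n → F | g ⬝ᵥ v = g ⬝ᵥ u} =
      if u = v then Fintype.card F ^ n else Fintype.card F ^ (n - 1) := by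
  split_ifs with huv
  · simp [huv]
  · rw [← card_filter_dotProduct_eq_zero (sub_ne_zero.2 (Ne.symm huv))]
    simp [dotProduct_sub, sub_eq_zero]

theorem sum_sum_sq_card_filter_dotProduct_eq {n : ℕ} (T : Finset (Fin n → F)) :
    ∑ g : Fin n → F, ∑ c : F, #{v ∈ T | g ⬝ᵥ v = c} ^ 2 + #T * Fintype.card F ^ (n - 1) =
      #T * Fintype.card F ^ n + #T ^ 2 * Fintype.card F ^ (n - 1) := by
  have hpairs : ∑ g : Fin n → F, ∑ c : F, #{v ∈ T | g ⬝ᵥ v = c} ^ 2 =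
      ∑ u ∈ T, ∑ v ∈ T, #{g : Fin n → F | g ⬝ᵥ v = g ⬝ᵥ u} := by
    simp_rw [sum_sq_card_filter_eq, card_filter]
    rw [sum_comm]
    exact sum_congr rfl fun u _ => sum_comm
  have hrow (u : Fin n → F) (hu : u ∈ T) :
      ∑ v ∈ T, #{g : Fin n → F | g ⬝ᵥ v = g ⬝ᵥ u} + Fintype.card F ^ (n - 1) =
        Fintype.card F ^ n + #T * Fintype.card F ^ (n - 1) := by
    simp_rw [card_filter_dotProduct_eq_dotProduct]
    rw [← add_sum_erase T _ hu, if_pos rfl,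
      sum_congr rfl fun v hv => if_neg (ne_of_mem_erase hv).symm, sum_const,
      card_erase_of_mem hu, smul_eq_mul]
    conv_rhs => rw [← Nat.sub_add_cancel (card_pos.2 ⟨u, hu⟩)]
    ring
  rw [hpairs, ← smul_eq_mul (#T), ← sum_const, ← sum_add_distrib, sum_congr rfl hrow, sum_const,
    smul_eq_mul]
  ring

end DotProduct

def MeetsEveryLine (F : Type*) {V : Type*} [Semiring F] [AddCommMonoid V] [Module F V] (T : Set V) :
    Prop :=
  ∀ a d : V, d ≠ 0 → ∃ c : F, a + c • d ∈ T

theorem ProgFree.meetsEveryLine_compl {p n : ℕ} [NeZero p] {S : Finset (Fin n → ZMod p)}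
    (hS : ProgFree p n p S) : MeetsEveryLine (ZMod p) (↑Sᶜ : Set (Fin n → ZMod p)) := by
  intro a d hd
  by_contra! hline
  exact hS ⟨a, d, hd, fun i _ => by simpa using hline i⟩

namespace MeetsEveryLine

variable {F : Type*} [Field F]

theorem preimage {V W : Type*} [AddCommGroup V] [Module F V] [AddCommGroup W] [Module F W]
    {T : Set V} (hT : MeetsEveryLine F T) {f : W →ₗ[F] V} (hf : Function.Injective f) (v₀ : V) :
    MeetsEveryLine F ((fun w => v₀ + f w) ⁻¹' T) := by
  intro a d hd
  obtain ⟨c, hc⟩ := hT (v₀ + f a) (f d) ((map_ne_zero_iff f hf).2 hd)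
  exact ⟨c, by simpa [add_assoc] using hc⟩

theorem exists_dotProduct_eq {T : Set (Fin 2 → F)} (hT : MeetsEveryLine F T)
    {y : Fin 2 → F} (hy : y ≠ 0) (c : F) : ∃ x ∈ T, y ⬝ᵥ x = c := by
  obtain ⟨a, ha⟩ := LinearMap.surjective (dotProductEquiv_ne_zero hy) c
  have hd : ![-y 1, y 0] ≠ 0 := by
    contrapose! hy
    ext i
    fin_cases i
    · simpa using congrFun hy 1
    · simpa using congrFun hy 0
  have hyd : y ⬝ᵥ ![-y 1, y 0] = 0 := by
    simp [dotProduct, Fin.sum_univ_two, mul_comm]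
  obtain ⟨t, ht⟩ := hT a _ hd
  exact ⟨_, ht, by rw [dotProduct_add, dotProduct_smul, hyd, smul_zero, add_zero]; exact ha⟩

variable [Fintype F]

theorem two_mul_card_sub_one_le_card_filter_sub_mem {V : Type*} [AddCommGroup V] [Module F V]
    [DecidableEq V] {T : Finset V} (hT : MeetsEveryLine F (T : Set V)) (W : Submodule F V)
    [DecidablePred (· ∈ W)] (hW : Module.finrank F W = 2) (v₀ : V) :
    2 * Fintype.card F - 1 ≤ #{v ∈ T | v - v₀ ∈ W} := by
  have : FiniteDimensional F W := .of_finrank_pos (by omega)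
  let f : (Fin 2 → F) →ₗ[F] V :=
    W.subtype ∘ₗ (LinearEquiv.ofFinrankEq _ _ (by simpa using hW.symm)).toLinearMap
  have hf : Function.Injective f := W.injective_subtype.comp (LinearEquiv.injective _)
  let T' : Finset (Fin 2 → F) := {α | v₀ + f α ∈ T}
  have hT' : MeetsEveryLine F (T' : Set (Fin 2 → F)) := by
    intro a d hd
    obtain ⟨c, hc⟩ := hT.preimage hf v₀ a d hd
    exact ⟨c, by simpa [T'] using hc⟩
  have hne : T'.Nonempty := by
    obtain ⟨c, hc⟩ := hT' 0 (Pi.single 0 1) (by simp)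
    exact ⟨_, hc⟩
  have hcard := jamison_lower_bound T' hne fun y hy c => hT'.exists_dotProduct_eq hy c
  have hle : #T' ≤ #{v ∈ T | v - v₀ ∈ W} := by
    refine card_le_card_of_injOn (fun α => v₀ + f α) (fun α hα => ?_)
      fun α _ β _ h => hf (add_left_cancel h)
    simp only [T', coe_filter, mem_univ, true_and, Set.mem_ofPred_eq] at hα ⊢
    exact ⟨hα, by simp [f]⟩
  have := Fintype.card_pos (α := F)
  omega

variable [DecidableEq F] {T : Finset (Fin 3 → F)}

theorem two_mul_card_sub_one_le_card_filter_dotProduct_eq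
    (hT : MeetsEveryLine F (T : Set (Fin 3 → F))) {g : Fin 3 → F} (hg : g ≠ 0) (c : F) :
    2 * Fintype.card F - 1 ≤ #{v ∈ T | g ⬝ᵥ v = c} := by
  classical
  let φ := dotProductEquiv F (Fin 3) g
  obtain ⟨v₀, hv₀⟩ := LinearMap.surjective (dotProductEquiv_ne_zero hg) c
  have hrank : Module.finrank F (LinearMap.ker φ) = 2 := by
    simpa using Module.Dual.finrank_ker_add_one_of_ne_zero (dotProductEquiv_ne_zero hg)
  convert hT.two_mul_card_sub_one_le_card_filter_sub_mem _ hrank v₀ using 3 with v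
  simp [φ, dotProduct_sub, sub_eq_zero, ← hv₀]

theorem sum_sq_card_filter_dotProduct_le (hT : MeetsEveryLine F (T : Set (Fin 3 → F)))
    {g : Fin 3 → F} (hg : g ≠ 0) :
    ∑ c : F, (#{v ∈ T | g ⬝ᵥ v = c} : ℝ) ^ 2 ≤
      (#T - (Fintype.card F - 1) * (2 * Fintype.card F - 1)) ^ 2 +
        (Fintype.card F - 1) * (2 * Fintype.card F - 1) ^ 2 := by
  set q : ℝ := (Fintype.card F : ℝ)
  have hsum : ∑ c : F, (#{v ∈ T | g ⬝ᵥ v = c} : ℝ) = #T := by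
    exact_mod_cast (card_eq_sum_card_fiberwise fun _ _ => mem_univ _).symm
  have hlow (c : F) : 2 * q - 1 ≤ #{v ∈ T | g ⬝ᵥ v = c} := by
    have h := hT.two_mul_card_sub_one_le_card_filter_dotProduct_eq hg c
    have : 1 ≤ 2 * Fintype.card F := by linarith [Fintype.card_pos (α := F)]
    rw [← Nat.cast_le (α := ℝ), Nat.cast_sub this] at h
    push_cast at h
    exact h
  have hup (c : F) : #{v ∈ T | g ⬝ᵥ v = c} ≤ #T - (q - 1) * (2 * q - 1) := by
    have hrest := card_nsmul_le_sum (univ.erase c) _ _ fun c' _ => hlow c'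
    rw [card_erase_of_mem (mem_univ c), card_univ, nsmul_eq_mul,
      Nat.cast_sub Fintype.card_pos] at hrest
    rw [← hsum, ← add_sum_erase _ _ (mem_univ c)]
    push_cast at hrest
    linarith
  have := sum_sq_le_of_forall_mem_Icc fun c (_ : c ∈ univ) => Set.mem_Icc.2 ⟨hlow c, hup c⟩
  rw [hsum, card_univ] at this
  linear_combination this

theorem mul_two_mul_sub_one_le_card (hT : MeetsEveryLine F (T : Set (Fin 3 → F))) :
    Fintype.card F * (2 * Fintype.card F - 1) ≤ #T := by
  have hg : (Pi.single 0 1 : Fin 3 → F) ≠ 0 := by simp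
  calc Fintype.card F * (2 * Fintype.card F - 1)
      ≤ ∑ c : F, #{v ∈ T | Pi.single 0 1 ⬝ᵥ v = c} := by
        simpa using card_nsmul_le_sum univ _ _ fun c _ =>
          hT.two_mul_card_sub_one_le_card_filter_dotProduct_eq hg c
    _ = #T := (card_eq_sum_card_fiberwise fun _ _ => mem_univ _).symm

theorem second_moment_le (hT : MeetsEveryLine F (T : Set (Fin 3 → F))) :
    (#T * Fintype.card F ^ 3 + #T ^ 2 * Fintype.card F ^ 2 - #T * Fintype.card F ^ 2 - #T ^ 2 : ℝ)
      ≤ (Fintype.card F ^ 3 - 1) * ((#T - (Fintype.card F - 1) * (2 * Fintype.card F - 1)) ^ 2 +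
        (Fintype.card F - 1) * (2 * Fintype.card F - 1) ^ 2) := by
  have hall : ∑ g : Fin 3 → F, ∑ c : F, (#{v ∈ T | g ⬝ᵥ v = c} : ℝ) ^ 2 =
      #T * Fintype.card F ^ 3 + #T ^ 2 * Fintype.card F ^ 2 - #T * Fintype.card F ^ 2 := by
    rw [eq_sub_iff_add_eq]
    exact_mod_cast sum_sum_sq_card_filter_dotProduct_eq T
  have hzero : ∑ c : F, (#{v ∈ T | (0 : Fin 3 → F) ⬝ᵥ v = c} : ℝ) ^ 2 = #T ^ 2 := by
    simp [filter_const, apply_ite]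
  have hcard : (#(univ.erase (0 : Fin 3 → F)) : ℝ) = Fintype.card F ^ 3 - 1 := by
    rw [card_erase_of_mem (mem_univ _), Nat.cast_sub (card_pos.2 univ_nonempty), card_univ]
    simp
  rw [← hall, ← add_sum_erase _ _ (mem_univ 0), hzero, add_sub_cancel_left, ← hcard,
    ← nsmul_eq_mul]
  exact sum_le_card_nsmul _ _ _ fun g hg =>
    hT.sum_sq_card_filter_dotProduct_le (ne_of_mem_erase hg)

theorem sub_card_le (hT : MeetsEveryLine F (T : Set (Fin 3 → F))) {q : ℕ}
    (hq : Fintype.card F = q) :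
    ((q : ℝ) ^ 3 - #T : ℝ) ≤
      (2 * (q : ℝ) ^ 5 - 4 * (q : ℝ) ^ 4 + 2 * (q : ℝ) ^ 3 - (q : ℝ) ^ 2 + 4 * (q : ℝ) - 2 -
        √(8 * (q : ℝ) ^ 6 - 20 * (q : ℝ) ^ 5 + 17 * (q : ℝ) ^ 4 - 12 * (q : ℝ) ^ 3 +
          20 * (q : ℝ) ^ 2 - 16 * (q : ℝ) + 4)) / (2 * (q : ℝ) ^ 2) := by
  have hq2 : 2 ≤ q := hq ▸ Fintype.one_lt_card
  have hmin : (q : ℝ) * (2 * q - 1) ≤ #T := by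
    have h := hT.mul_two_mul_sub_one_le_card
    rw [hq, ← Nat.cast_le (α := ℝ), Nat.cast_mul, Nat.cast_sub (by omega)] at h
    push_cast at h
    exact h
  have hmoment := hT.second_moment_le
  rw [hq] at hmoment
  have hQ : (2 : ℝ) ≤ q := by exact_mod_cast hq2
  generalize (q : ℝ) = Q at *
  generalize (#T : ℝ) = t at *
  set B := 2 * Q ^ 5 - 4 * Q ^ 4 + 2 * Q ^ 3 - Q ^ 2 + 4 * Q - 2
  set C := Q ^ 8 - 4 * Q ^ 7 + 6 * Q ^ 6 - 5 * Q ^ 5 + 5 * Q ^ 4 - 6 * Q ^ 3 + 4 * Q ^ 2 - Q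
  have hquad : 0 ≤ Q ^ 2 * (Q ^ 3 - t) ^ 2 - B * (Q ^ 3 - t) + C := by
    refine nonneg_of_mul_nonneg_right ?_ (by linarith : 0 < Q - 1)
    linear_combination hmoment
  have hdisc : B ^ 2 - 4 * Q ^ 2 * C =
      8 * Q ^ 6 - 20 * Q ^ 5 + 17 * Q ^ 4 - 12 * Q ^ 3 + 20 * Q ^ 2 - 16 * Q + 4 := by ring
  -- Since `t ≥ Q (2Q - 1)`, the point `Q ^ 3 - t` lies left of the larger root.
  have hlarge : 2 * Q ^ 2 * (Q ^ 3 - t) - B < √(B ^ 2 - 4 * Q ^ 2 * C) := by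
    refine lt_of_le_of_lt (b := Q ^ 2 - 4 * Q + 2)
      (by nlinarith [mul_le_mul_of_nonneg_left hmin (sq_nonneg Q)]) (Real.lt_sqrt_of_sq_lt ?_)
    have : 0 < 4 * Q ^ 3 * (Q - 1) ^ 2 * (2 * Q - 1) :=
      mul_pos (mul_pos (by positivity) (pow_pos (by linarith) 2)) (by linarith)
    linear_combination this
  have hroot := le_sub_sqrt_of_quadratic_nonneg (sq_nonneg Q) hquad hlarge
  rw [hdisc] at hroot
  rw [le_div_iff₀ (by positivity)]
  linarith

end MeetsEveryLine

theorem stmt_4_general (p : ℕ) (hp : p.Prime)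
    (S : Finset (Fin 3 → ZMod p)) (hS : ProgFree p 3 p S) :
    (S.card : ℝ) ≤
      (2 * (p : ℝ) ^ 5 - 4 * (p : ℝ) ^ 4 + 2 * (p : ℝ) ^ 3 - (p : ℝ) ^ 2 + 4 * (p : ℝ) - 2 -
        Real.sqrt (8 * (p : ℝ) ^ 6 - 20 * (p : ℝ) ^ 5 + 17 * (p : ℝ) ^ 4 - 12 * (p : ℝ) ^ 3 +
          20 * (p : ℝ) ^ 2 - 16 * (p : ℝ) + 4)) /
      (2 * (p : ℝ) ^ 2) := by
  have : Fact p.Prime := ⟨hp⟩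
  have hcard : (#S : ℝ) = p ^ 3 - #Sᶜ := by
    rw [eq_sub_iff_add_eq]
    exact_mod_cast (card_add_card_compl S).trans (by simp)
  rw [hcard]
  exact hS.meetsEveryLine_compl.sub_card_le (ZMod.card p)

theorem stmt_4 (p : ℕ) (hp : p.Prime) (hp3 : 3 ≤ p)
    (S : Finset (Fin 3 → ZMod p)) (hS : ProgFree p 3 p S) :
    (S.card : ℝ) ≤
      (2 * (p : ℝ) ^ 5 - 4 * (p : ℝ) ^ 4 + 2 * (p : ℝ) ^ 3 - (p : ℝ) ^ 2 + 4 * (p : ℝ) - 2 -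
        Real.sqrt (8 * (p : ℝ) ^ 6 - 20 * (p : ℝ) ^ 5 + 17 * (p : ℝ) ^ 4 - 12 * (p : ℝ) ^ 3 +
          20 * (p : ℝ) ^ 2 - 16 * (p : ℝ) + 4)) /
      (2 * (p : ℝ) ^ 2) :=
  stmt_4_general p hp S hS
end

section
/- Let S be a 5-progression-free subset of F_5^2 with |S| = 16. Then there are at least 12 affine lines ℓ of F_5^2 with |ℓ ∩ S| = 4. -/
/-- An affine line of `F_5^2`, as a finite set of points. -/
def IsLine (L : Finset (Fin 2 → ZMod 5)) : Prop :=
  ∃ a d : Fin 2 → ZMod 5, d ≠ 0 ∧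
    L = Finset.image (fun t : ZMod 5 => a + t • d) Finset.univ

/-!
Double counting. Every point of `F_5^2` lies on `6` lines and two distinct points lie on exactly
one, so the numbers `r_L = |L ∩ S|` satisfy `∑ r_L = 6 · 16 = 96` and
`∑ r_L ^ 2 = 96 + 16 · 15 = 336`. Since `S` contains no line, `r_L ≤ 4`, and
`r ^ 2 ≤ 3 r + 4 [r = 4]` for `r ≤ 4`; summing gives `336 ≤ 288 + 4 · #{L | r_L = 4}`.
-/

open Finset

section DoubleCounting

variable {α : Type*} [DecidableEq α]

theorem sum_card_inter_sq (B : Finset (Finset α)) (s : Finset α) :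
    ∑ t ∈ B, #(s ∩ t) ^ 2 = ∑ a ∈ s, ∑ b ∈ s, #{t ∈ B | a ∈ t ∧ b ∈ t} := by
  have hcard : ∀ t, #(s ∩ t) = ∑ a ∈ s, if a ∈ t then 1 else 0 := fun t => by
    rw [← card_filter, filter_mem_eq_inter]
  simp_rw [card_filter, sq, hcard, sum_mul_sum, ite_zero_mul_ite_zero, one_mul]
  rw [sum_comm]
  exact sum_congr rfl fun a _ => sum_comm

theorem sum_card_inter_sq_of_forall_card_eq_one {B : Finset (Finset α)} {s : Finset α} {k : ℕ}
    (hk : ∀ a ∈ s, #{t ∈ B | a ∈ t} = k)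
    (hpair : ∀ a ∈ s, ∀ b ∈ s, a ≠ b → #{t ∈ B | a ∈ t ∧ b ∈ t} = 1) :
    ∑ t ∈ B, #(s ∩ t) ^ 2 = #s * (k + (#s - 1)) := by
  rw [sum_card_inter_sq, ← smul_eq_mul, ← sum_const]
  refine sum_congr rfl fun a ha => ?_
  rw [← add_sum_erase s _ ha, ← card_erase_of_mem ha, card_eq_sum_ones (s.erase a)]
  simp only [and_self, hk a ha]
  congr 1
  exact sum_congr rfl fun b hb => hpair a ha b (mem_of_mem_erase hb) (ne_of_mem_erase hb).symm

end DoubleCounting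

theorem sq_le_pred_mul_add_ite {r m : ℕ} (h : r ≤ m) :
    r ^ 2 ≤ (m - 1) * r + if r = m then m else 0 := by
  rcases h.eq_or_lt with rfl | hlt
  · rcases r with _ | r <;> simp [sq, add_mul]
  · rw [if_neg hlt.ne, add_zero, sq]
    exact Nat.mul_le_mul_right r (Nat.le_sub_one_of_lt hlt)

theorem sum_sq_le_of_forall_le {ι : Type*} (B : Finset ι) (f : ι → ℕ) {m : ℕ}
    (h : ∀ i ∈ B, f i ≤ m) :
    ∑ i ∈ B, f i ^ 2 ≤ (m - 1) * ∑ i ∈ B, f i + m * #{i ∈ B | f i = m} := by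
  calc ∑ i ∈ B, f i ^ 2 ≤ ∑ i ∈ B, ((m - 1) * f i + if f i = m then m else 0) :=
        sum_le_sum fun i hi => sq_le_pred_mul_add_ite (h i hi)
    _ = _ := by
      rw [sum_add_distrib, mul_sum, card_filter, mul_sum]
      simp_rw [mul_ite, mul_one, mul_zero]

namespace F5Plane

instance : Fact (Nat.Prime 5) := ⟨Nat.prime_five⟩

def line : (ZMod 5 × ZMod 5) ⊕ ZMod 5 → Finset (Fin 2 → ZMod 5)
  | .inl (m, b) => {p | p 1 = m * p 0 + b}
  | .inr c => {p | p 0 = c}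

def lineIndex (a d : Fin 2 → ZMod 5) : (ZMod 5 × ZMod 5) ⊕ ZMod 5 :=
  if d 0 = 0 then .inr (a 0) else .inl (d 1 / d 0, a 1 - d 1 / d 0 * a 0)

theorem line_injective : Function.Injective line := by decide

theorem card_line : ∀ i, #(line i) = 5 := by decide

theorem card_filter_mem_line_and_mem : ∀ p q : Fin 2 → ZMod 5,
    #{i | p ∈ line i ∧ q ∈ line i} = if p = q then 6 else 1 := by
  decide

theorem add_smul_mem_line_lineIndex (a d : Fin 2 → ZMod 5) (t : ZMod 5) :
    a + t • d ∈ line (lineIndex a d) := by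
  unfold lineIndex
  split_ifs with hd
  · simp [line, hd]
  · simp only [line, mem_filter, mem_univ, true_and, Pi.add_apply, Pi.smul_apply, smul_eq_mul]
    field_simp
    ring

theorem image_add_smul_eq_line {a d : Fin 2 → ZMod 5} (hd : d ≠ 0) :
    univ.image (fun t : ZMod 5 => a + t • d) = line (lineIndex a d) := by
  refine eq_of_subset_of_card_le ?_ ?_
  · simp only [image_subset_iff, mem_univ, add_smul_mem_line_lineIndex, forall_const]
  · have hinj : Function.Injective (fun t : ZMod 5 => a + t • d) :=
      (add_right_injective a).comp (smul_left_injective _ hd)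
    rw [card_line, card_image_of_injective _ hinj, card_univ, ZMod.card]

theorem exists_lineIndex_eq : ∀ i, ∃ a d : Fin 2 → ZMod 5, d ≠ 0 ∧ lineIndex a d = i
  | .inl (m, b) => ⟨![0, b], ![1, m], fun h => one_ne_zero (congrFun h 0), by simp [lineIndex]⟩
  | .inr c => ⟨![c, 0], ![0, 1], fun h => one_ne_zero (congrFun h 1), by simp [lineIndex]⟩

theorem isLine_iff_exists_line {L : Finset (Fin 2 → ZMod 5)} :
    IsLine L ↔ ∃ i, line i = L := by
  constructor
  · rintro ⟨a, d, hd, rfl⟩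
    exact ⟨lineIndex a d, (image_add_smul_eq_line hd).symm⟩
  · rintro ⟨i, rfl⟩
    obtain ⟨a, d, hd, rfl⟩ := exists_lineIndex_eq i
    exact ⟨a, d, hd, (image_add_smul_eq_line hd).symm⟩

def lines : Finset (Finset (Fin 2 → ZMod 5)) := univ.image line

theorem mem_lines {L : Finset (Fin 2 → ZMod 5)} : L ∈ lines ↔ IsLine L := by
  simp [lines, isLine_iff_exists_line]

theorem card_filter_lines (Q : Finset (Fin 2 → ZMod 5) → Prop) [DecidablePred Q] :
    #{L ∈ lines | Q L} = #{i | Q (line i)} := by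
  rw [lines, filter_image, card_image_of_injective _ line_injective]

theorem card_filter_mem_lines (p : Fin 2 → ZMod 5) : #{L ∈ lines | p ∈ L} = 6 := by
  have h := card_filter_mem_line_and_mem p p
  simp only [and_self, if_true] at h
  rw [card_filter_lines (p ∈ ·), h]

theorem card_filter_mem_lines_and_mem {p q : Fin 2 → ZMod 5} (h : p ≠ q) :
    #{L ∈ lines | p ∈ L ∧ q ∈ L} = 1 := by
  rw [card_filter_lines (fun L => p ∈ L ∧ q ∈ L), card_filter_mem_line_and_mem, if_neg h]

end F5Plane

theorem card_inter_le_four_of_progFree {S L : Finset (Fin 2 → ZMod 5)} (hS : ProgFree 5 2 5 S)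
    (hL : IsLine L) : #(S ∩ L) ≤ 4 := by
  obtain ⟨a, d, hd, rfl⟩ := hL
  have hL_not_subset : ¬ univ.image (fun t : ZMod 5 => a + t • d) ⊆ S := fun hsub =>
    hS ⟨a, d, hd, fun i _ => hsub (mem_image_of_mem _ (mem_univ _))⟩
  refine Nat.le_of_lt_succ ?_
  calc #(S ∩ univ.image (fun t : ZMod 5 => a + t • d))
      < #(univ.image (fun t : ZMod 5 => a + t • d)) :=
        card_lt_card ⟨inter_subset_right, fun h => hL_not_subset (h.trans inter_subset_left)⟩
    _ ≤ 5 := card_image_le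

theorem stmt_9 (S : Finset (Fin 2 → ZMod 5)) (hS : ProgFree 5 2 5 S)
    (hcard : S.card = 16) :
    12 ≤ {L : Finset (Fin 2 → ZMod 5) | IsLine L ∧ (L ∩ S).card = 4}.ncard := by
  have hset : {L | IsLine L ∧ #(L ∩ S) = 4} = ↑{L ∈ F5Plane.lines | #(S ∩ L) = 4} := by
    ext L
    simp [F5Plane.mem_lines, inter_comm]
  have hsum : ∑ L ∈ F5Plane.lines, #(S ∩ L) = 16 * 6 :=
    hcard ▸ sum_card_inter fun p _ => F5Plane.card_filter_mem_lines p
  have hsum_sq : ∑ L ∈ F5Plane.lines, #(S ∩ L) ^ 2 = 16 * (6 + (16 - 1)) :=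
    hcard ▸ sum_card_inter_sq_of_forall_card_eq_one (fun p _ => F5Plane.card_filter_mem_lines p)
      fun _ _ _ _ hpq => F5Plane.card_filter_mem_lines_and_mem hpq
  have hmoment := sum_sq_le_of_forall_le F5Plane.lines (fun L => #(S ∩ L))
    fun L hL => card_inter_le_four_of_progFree hS (F5Plane.mem_lines.1 hL)
  rw [hset, Set.ncard_coe_finset]
  omega
end

section
/- Let m ∈ {14, 15} and let S be a 5-progression-free subset of F_5^2 with |S| = m. Then the number of affine lines ℓ of F_5^2 with |ℓ ∩ S| = 4 is at most m. -/
/-!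
Write `r_L = #(S ∩ L)`. In the affine plane over `F_5` every point lies on `6` lines, two distinct
points on exactly one, and there are `30` lines; double counting incidences then gives
`∑ r_L = 6m` and `∑ r_L ^ 2 = m ^ 2 + 5m`. As `(r - 2)(r - 3)` is a nonnegative integer that equals
`2` at `r = 4`, twice the number of `4`-lines is at most `∑ (r_L - 2)(r_L - 3) = m ^ 2 - 25m + 180`,
which is `26` for `m = 14` and `30` for `m = 15`.
-/

open Finset

namespace Finset

variable {α : Type*} [DecidableEq α] (𝓛 : Finset (Finset α)) (S : Finset α)

theorem sum_card_inter_eq_sum_card_filter_mem :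
    ∑ L ∈ 𝓛, #(S ∩ L) = ∑ x ∈ S, #{L ∈ 𝓛 | x ∈ L} := by
  simp_rw [← filter_mem_eq_inter, card_eq_sum_ones, sum_filter]
  exact sum_comm

theorem sum_sq_card_inter_eq_sum_card_filter_mem_mem :
    ∑ L ∈ 𝓛, #(S ∩ L) ^ 2 = ∑ x ∈ S, ∑ y ∈ S, #{L ∈ 𝓛 | x ∈ L ∧ y ∈ L} := by
  simp_rw [sq, ← filter_mem_eq_inter, card_eq_sum_ones, sum_filter, sum_mul_sum]
  rw [sum_comm]
  refine sum_congr rfl fun x _ => ?_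
  rw [sum_comm]
  refine sum_congr rfl fun y _ => sum_congr rfl fun L _ => ?_
  split_ifs <;> simp_all

theorem sum_sq_card_inter_add_card {r : ℕ} (hr : ∀ x ∈ S, #{L ∈ 𝓛 | x ∈ L} = r)
    (hpair : ∀ x ∈ S, ∀ y ∈ S, x ≠ y → #{L ∈ 𝓛 | x ∈ L ∧ y ∈ L} = 1) :
    ∑ L ∈ 𝓛, #(S ∩ L) ^ 2 + #S = #S * (r + #S) := by
  have hrow : ∀ x ∈ S, ∑ y ∈ S, #{L ∈ 𝓛 | x ∈ L ∧ y ∈ L} + 1 = r + #S := by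
    intro x hx
    have hoff : ∑ y ∈ S.erase x, #{L ∈ 𝓛 | x ∈ L ∧ y ∈ L} = #S - 1 := by
      rw [sum_congr rfl fun y hy => hpair x hx y (mem_of_mem_erase hy) (ne_of_mem_erase hy).symm,
        sum_const, smul_eq_mul, mul_one, card_erase_of_mem hx]
    rw [← add_sum_erase S _ hx, hoff]
    simp only [and_self, hr x hx]
    have := card_pos.2 ⟨x, hx⟩
    omega
  have := sum_congr rfl hrow
  rw [sum_add_distrib, sum_const, sum_const, smul_eq_mul, smul_eq_mul, mul_one] at this
  rw [sum_sq_card_inter_eq_sum_card_filter_mem_mem, this, mul_comm]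

theorem two_mul_card_filter_eq_four_add_le {ι : Type*} (s : Finset ι) (f : ι → ℕ) :
    2 * #{i ∈ s | f i = 4} + 5 * ∑ i ∈ s, f i ≤ ∑ i ∈ s, f i ^ 2 + 6 * #s := by
  rw [card_filter, card_eq_sum_ones, mul_sum, mul_sum, mul_sum, ← sum_add_distrib,
    ← sum_add_distrib]
  refine sum_le_sum fun i _ => ?_
  split_ifs with h
  · simp [h]
  · have : f i ≤ 3 ∨ 5 ≤ f i := by omega
    rcases this with h' | h'
    · interval_cases f i <;> omega
    · nlinarith

end Finset

section AffineLines

variable (F : Type*) {V : Type*} [Field F] [Fintype F] [AddCommGroup V] [Module F V]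
  [DecidableEq V]

def affineLine (a d : V) : Finset V := univ.image fun t : F => a + t • d

variable (V) in
def affineLines [Fintype V] : Finset (Finset V) :=
  (univ.filter fun p : V × V => p.2 ≠ 0).image fun p => affineLine F p.1 p.2

variable {F} {a d x y : V}

@[simp]
theorem mem_affineLine : x ∈ affineLine F a d ↔ ∃ t : F, a + t • d = x := by
  simp [affineLine]

theorem mem_affineLines [Fintype V] {L : Finset V} :
    L ∈ affineLines F V ↔ ∃ a d : V, d ≠ 0 ∧ affineLine F a d = L := by
  simp [affineLines]

theorem card_affineLine (hd : d ≠ 0) : #(affineLine F a d) = Fintype.card F :=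
  card_image_of_injective _ fun _ _ h => smul_left_injective F hd (add_left_cancel h)

theorem affineLine_smul {c : F} (hc : c ≠ 0) : affineLine F a (c • d) = affineLine F a d := by
  ext x
  simp only [mem_affineLine, smul_smul]
  exact ⟨fun ⟨t, ht⟩ => ⟨t * c, ht⟩, fun ⟨t, ht⟩ => ⟨t * c⁻¹, by rwa [inv_mul_cancel_right₀ hc]⟩⟩

theorem affineLine_eq_of_mem (hx : x ∈ affineLine F a d) :
    affineLine F x d = affineLine F a d := by
  obtain ⟨s, rfl⟩ := mem_affineLine.1 hx
  ext z
  simp only [mem_affineLine]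
  refine ⟨fun ⟨t, ht⟩ => ⟨s + t, by rw [← ht, add_smul, add_assoc]⟩, fun ⟨t, ht⟩ => ⟨t - s, ?_⟩⟩
  rw [← ht, sub_smul, add_assoc, add_sub_cancel]

theorem affineLine_eq_of_mem_of_mem (hx : x ∈ affineLine F a d) (hy : y ∈ affineLine F a d)
    (hxy : x ≠ y) : affineLine F a d = affineLine F x (y - x) := by
  obtain ⟨s, rfl⟩ := mem_affineLine.1 hx
  obtain ⟨t, rfl⟩ := mem_affineLine.1 hy
  have hts : t - s ≠ 0 := sub_ne_zero.2 fun h => hxy (by rw [h])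
  rw [show a + t • d - (a + s • d) = (t - s) • d by rw [sub_smul]; abel, affineLine_smul hts,
    affineLine_eq_of_mem hx]

variable [Fintype V]

theorem filter_mem_mem_affineLines (hxy : x ≠ y) :
    {L ∈ affineLines F V | x ∈ L ∧ y ∈ L} = {affineLine F x (y - x)} := by
  ext L
  simp only [mem_filter, mem_affineLines, mem_singleton]
  constructor
  · rintro ⟨⟨a, d, -, rfl⟩, hx, hy⟩
    exact affineLine_eq_of_mem_of_mem hx hy hxy
  · rintro rfl
    refine ⟨⟨x, y - x, sub_ne_zero.2 hxy.symm, rfl⟩, mem_affineLine.2 ⟨0, by simp⟩,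
      mem_affineLine.2 ⟨1, by simp⟩⟩

theorem card_sub_one_mul_card_filter_mem_affineLines (x : V) :
    (Fintype.card F - 1) * #{L ∈ affineLines F V | x ∈ L} = Fintype.card V - 1 := by
  have hcount :=
    sum_card_inter_eq_sum_card_filter_mem {L ∈ affineLines F V | x ∈ L} (univ.erase x)
  have hline :
      ∀ L ∈ {L ∈ affineLines F V | x ∈ L}, #(univ.erase x ∩ L) = Fintype.card F - 1 := by
    intro L hL
    obtain ⟨⟨a, d, hd, rfl⟩, hx⟩ := by simpa only [mem_filter, mem_affineLines] using hL
    rw [erase_inter, univ_inter, card_erase_of_mem hx, card_affineLine hd]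
  have hpoint : ∀ y ∈ univ.erase x, #{L ∈ {L ∈ affineLines F V | x ∈ L} | y ∈ L} = 1 := by
    intro y hy
    rw [filter_filter, filter_mem_mem_affineLines (ne_of_mem_erase hy).symm, card_singleton]
  rwa [sum_congr rfl hline, sum_congr rfl hpoint, sum_const, sum_const,
    card_erase_of_mem (mem_univ x), card_univ, smul_eq_mul, smul_eq_mul, mul_one,
    mul_comm] at hcount

theorem card_sub_one_mul_card_mul_card_affineLines :
    (Fintype.card F - 1) * (Fintype.card F * #(affineLines F V)) =
      Fintype.card V * (Fintype.card V - 1) := by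
  have hcount := sum_card_inter_eq_sum_card_filter_mem (affineLines F V) univ
  have hline : ∀ L ∈ affineLines F V, #(univ ∩ L) = Fintype.card F := by
    intro L hL
    obtain ⟨a, d, hd, rfl⟩ := mem_affineLines.1 hL
    rw [univ_inter, card_affineLine hd]
  rw [sum_congr rfl hline, sum_const, smul_eq_mul] at hcount
  rw [mul_comm (Fintype.card F), hcount, mul_sum,
    sum_congr rfl fun x _ => card_sub_one_mul_card_filter_mem_affineLines x, sum_const, card_univ,
    smul_eq_mul]

end AffineLines

instance Nat.fact_prime_five : Fact (Nat.Prime 5) := ⟨Nat.prime_five⟩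

local notation "𝔽₅²" => Fin 2 → ZMod 5

theorem isLine_iff_mem_affineLines {L : Finset 𝔽₅²} :
    IsLine L ↔ L ∈ affineLines (ZMod 5) 𝔽₅² := by
  simp only [IsLine, mem_affineLines, affineLine, eq_comm]

theorem card_filter_mem_affineLines_five (x : 𝔽₅²) :
    #{L ∈ affineLines (ZMod 5) 𝔽₅² | x ∈ L} = 6 := by
  have := card_sub_one_mul_card_filter_mem_affineLines (F := ZMod 5) x
  simp only [ZMod.card, Fintype.card_fun, Fintype.card_fin] at this
  omega

theorem card_affineLines_five : #(affineLines (ZMod 5) 𝔽₅²) = 30 := by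
  have := card_sub_one_mul_card_mul_card_affineLines (F := ZMod 5) (V := 𝔽₅²)
  simp only [ZMod.card, Fintype.card_fun, Fintype.card_fin] at this
  omega

theorem two_mul_card_filter_card_inter_eq_four_add_le (S : Finset 𝔽₅²) :
    2 * #{L ∈ affineLines (ZMod 5) 𝔽₅² | #(S ∩ L) = 4} + 25 * #S ≤ #S ^ 2 + 180 := by
  have hsum := sum_card_inter_eq_sum_card_filter_mem (affineLines (ZMod 5) 𝔽₅²) S
  rw [sum_congr rfl fun x _ => card_filter_mem_affineLines_five x, sum_const, smul_eq_mul] at hsum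
  have hsq := sum_sq_card_inter_add_card (affineLines (ZMod 5) 𝔽₅²) S
    (fun x _ => card_filter_mem_affineLines_five x)
    (fun x _ y _ hxy => by rw [filter_mem_mem_affineLines hxy, card_singleton])
  have key := two_mul_card_filter_eq_four_add_le (affineLines (ZMod 5) 𝔽₅²)
    fun L => #(S ∩ L)
  rw [hsum, card_affineLines_five] at key
  linarith

theorem stmt_10_general (m : ℕ) (hm : m = 14 ∨ m = 15)
    (S : Finset (Fin 2 → ZMod 5)) (hcard : S.card = m) :
    {L : Finset (Fin 2 → ZMod 5) | IsLine L ∧ (L ∩ S).card = 4}.ncard ≤ m := by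
  have hset : {L : Finset (Fin 2 → ZMod 5) | IsLine L ∧ (L ∩ S).card = 4} =
      ↑{L ∈ affineLines (ZMod 5) 𝔽₅² | #(S ∩ L) = 4} := by
    ext L
    simp [isLine_iff_mem_affineLines, inter_comm]
  have key := two_mul_card_filter_card_inter_eq_four_add_le S
  rw [hset, Set.ncard_coe_finset]
  rw [hcard] at key
  rcases hm with rfl | rfl <;> omega

theorem stmt_10 (m : ℕ) (hm : m = 14 ∨ m = 15)
    (S : Finset (Fin 2 → ZMod 5)) (hS : ProgFree 5 2 5 S) (hcard : S.card = m) :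
    {L : Finset (Fin 2 → ZMod 5) | IsLine L ∧ (L ∩ S).card = 4}.ncard ≤ m :=
  stmt_10_general m hm S hcard
end

section
/- The maximum cardinality of a 5-progression-free subset of F_5^2 is exactly 16: there exists a 5-progression-free subset of F_5^2 with 16 elements, and every 5-progression-free subset of F_5^2 has at most 16 elements. -/
open MvPolynomial Finset

def IsHyperplaneBlocking {K σ : Type*} [Field K] [Fintype σ] (T : Finset (σ → K)) : Prop :=
  ∀ a : σ → K, a ≠ 0 → ∀ c : K, ∃ t ∈ T, a ⬝ᵥ t = c

section Jamison

variable {K σ : Type*} [Field K] [Fintype σ]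

lemma totalDegree_one_sub_linear_le (v : σ → K) :
    (1 - ∑ i, C (v i) * X i : MvPolynomial σ K).totalDegree ≤ 1 := by
  refine (totalDegree_sub _ _).trans (max_le (by simp) ?_)
  refine (totalDegree_finsetSum_le fun i _ => ?_)
  exact (totalDegree_mul _ _).trans (by simp)

theorem IsHyperplaneBlocking.le_card [Fintype K] [DecidableEq σ] [Nonempty σ] {T : Finset (σ → K)}
    (hT : IsHyperplaneBlocking T) : (Fintype.card K - 1) * Fintype.card σ + 1 ≤ T.card := by
  classical
  obtain ⟨t₀, ht₀, -⟩ := hT (Pi.single (Classical.arbitrary σ) 1) (by simp) 0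
  set f : MvPolynomial σ K := ∏ t ∈ T.erase t₀, (1 - ∑ i, C ((t - t₀) i) * X i)
  have eval_f (x : σ → K) : eval x f = ∏ t ∈ T.erase t₀, (1 - (t - t₀) ⬝ᵥ x) := by
    simp [f, dotProduct]
  have eval_f_eq_zero (x : σ → K) (hx : x ≠ 0) : eval x f = 0 := by
    obtain ⟨t, ht, hxt⟩ := hT x hx (x ⬝ᵥ t₀ + 1)
    have h_one : (t - t₀) ⬝ᵥ x = 1 := by
      rw [dotProduct_comm, dotProduct_sub, hxt, add_sub_cancel_left]
    have ht_ne : t ≠ t₀ := by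
      rintro rfl
      simp at h_one
    rw [eval_f]
    exact prod_eq_zero (mem_erase.2 ⟨ht_ne, ht⟩) (by rw [h_one, sub_self])
  have sum_eval : ∑ x, eval x f = 1 := by
    rw [Fintype.sum_eq_single 0 eval_f_eq_zero, eval_f]
    simp
  have deg_f : f.totalDegree ≤ T.card - 1 :=
    calc f.totalDegree ≤ ∑ t ∈ T.erase t₀, (1 - ∑ i, C ((t - t₀) i) * X i).totalDegree :=
          totalDegree_finsetProd _ _
      _ ≤ (T.erase t₀).card • 1 :=
          sum_le_card_nsmul _ _ 1 fun t _ => totalDegree_one_sub_linear_le _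
      _ = T.card - 1 := by rw [smul_eq_mul, mul_one, card_erase_of_mem ht₀]
  by_contra h
  have hT_pos : 0 < T.card := card_pos.2 ⟨t₀, ht₀⟩
  have sum_eval_zero : ∑ x, eval x f = 0 := sum_eval_eq_zero f (deg_f.trans_lt (by omega))
  rw [sum_eval] at sum_eval_zero
  exact one_ne_zero sum_eval_zero

end Jamison

namespace ProgFree

variable {p : ℕ}

lemma exists_add_smul_notMem {n : ℕ} {S : Finset (Fin n → ZMod p)} (hS : ProgFree p n p S) (a : Fin n → ZMod p) {d : Fin n → ZMod p}
    (hd : d ≠ 0) : ∃ i : ZMod p, a + i • d ∉ S := by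
  by_contra! h
  exact hS ⟨a, d, hd, fun i _ => h i⟩

variable [Fact p.Prime]

/-- Every line of the plane is a level set `{x | a ⬝ᵥ x = c}`, with direction `![a 1, -a 0]`. -/
lemma isHyperplaneBlocking_compl {S : Finset (Fin 2 → ZMod p)} (hS : ProgFree p 2 p S) :
    IsHyperplaneBlocking Sᶜ := by
  intro a ha c
  obtain ⟨j, hj⟩ : ∃ j, a j ≠ 0 := Function.ne_iff.1 ha
  have hd : ![a 1, -a 0] ≠ 0 := by
    contrapose! ha
    ext k
    fin_cases k
    · simpa using congrFun ha 1
    · simpa using congrFun ha 0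
  obtain ⟨i, hi⟩ := hS.exists_add_smul_notMem (Pi.single j (c / a j)) hd
  refine ⟨_, mem_compl.2 hi, ?_⟩
  rw [dotProduct_add, dotProduct_single, dotProduct_smul, mul_div_cancel₀ _ hj]
  simp [dotProduct, Fin.sum_univ_two, mul_comm]

theorem card_le {S : Finset (Fin 2 → ZMod p)} (hS : ProgFree p 2 p S) : S.card ≤ (p - 1) ^ 2 := by
  have h_compl := hS.isHyperplaneBlocking_compl.le_card
  have h_total := card_add_card_compl S
  simp only [Fintype.card_fun, Fintype.card_fin, ZMod.card] at h_compl h_total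
  obtain ⟨q, rfl⟩ : ∃ q, p = q + 1 := Nat.exists_eq_add_one.2 (Fact.out : p.Prime).pos
  simp only [add_tsub_cancel_right] at h_compl ⊢
  nlinarith

end ProgFree

theorem progFree_piFinset_ne_zero (p n : ℕ) [Fact p.Prime] :
    ProgFree p n p (Fintype.piFinset fun _ => {0}ᶜ) := by
  rintro ⟨a, d, hd, hmem⟩
  obtain ⟨j, hj⟩ : ∃ j, d j ≠ 0 := Function.ne_iff.1 hd
  have hi := hmem (-a j / d j).val (ZMod.val_lt _)
  rw [ZMod.natCast_zmod_val, Fintype.mem_piFinset] at hi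
  exact mem_compl.1 (hi j) (by simp [div_mul_cancel₀ _ hj])

theorem card_piFinset_ne_zero (p n : ℕ) [NeZero p] :
    (Fintype.piFinset fun (_ : Fin n) => ({0}ᶜ : Finset (ZMod p))).card = (p - 1) ^ n := by
  simp [card_compl]

theorem stmt_14 :
    (∃ S : Finset (Fin 2 → ZMod 5), ProgFree 5 2 5 S ∧ S.card = 16) ∧
    (∀ S : Finset (Fin 2 → ZMod 5), ProgFree 5 2 5 S → S.card ≤ 16) := by
  have : Fact (Nat.Prime 5) := ⟨Nat.prime_five⟩
  exact ⟨⟨_, progFree_piFinset_ne_zero 5 2, card_piFinset_ne_zero 5 2⟩, fun S hS => hS.card_le⟩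
end

section
/- There exists a 5-progression-free subset S of F_5^3 with |S| = 70 (i.e., r_5(F_5^3) ≥ 70). -/
/-!
It suffices that every affine line of `F_5^3` leaves the set. Rescaling the direction of a line
so that its first nonzero coordinate is `1`, and sliding the base point so that this coordinate
vanishes, puts each of the `775` lines into a normal form; `decide` checks the normal forms.
-/

theorem progFree_self_iff {p n : ℕ} [NeZero p] (S : Finset (Fin n → ZMod p)) :
    ProgFree p n p S ↔ ∀ a d : Fin n → ZMod p, d ≠ 0 → ∃ t : ZMod p, a + t • d ∉ S := by
  simp only [ProgFree, not_exists, not_and, not_forall]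
  refine forall₂_congr fun a d => imp_congr_right fun _ => ⟨?_, ?_⟩
  · rintro ⟨i, -, hi⟩
    exact ⟨i, hi⟩
  · rintro ⟨t, ht⟩
    exact ⟨t.val, t.val_lt, by rwa [ZMod.natCast_zmod_val]⟩

theorem exists_add_smul_notMem_of_reparam {R V : Type*} [Semiring R] [AddCommMonoid V]
    [Module R V] {S : Finset V} {a d : V} (s c : R)
    (h : ∃ t : R, (a + s • d) + t • (c • d) ∉ S) : ∃ t : R, a + t • d ∉ S := by
  obtain ⟨t, ht⟩ := h
  refine ⟨s + t * c, ?_⟩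
  rwa [add_smul, mul_smul, ← add_assoc]

def set70Mask : ℕ := 6296765451834178942362186628892122523

def InSet70 (x y z : ZMod 5) : Prop :=
  set70Mask.testBit (25 * x.val + 5 * y.val + z.val)

instance (x y z : ZMod 5) : Decidable (InSet70 x y z) := by
  unfold InSet70
  infer_instance

def set70 : Finset (Fin 3 → ZMod 5) :=
  Finset.univ.filter fun p => InSet70 (p 0) (p 1) (p 2)

theorem mem_set70 {p : Fin 3 → ZMod 5} : p ∈ set70 ↔ InSet70 (p 0) (p 1) (p 2) := by
  simp [set70]

theorem card_set70 : set70.card = 70 := by decide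

theorem exists_not_inSet70_line_1uv (b c u v : ZMod 5) :
    ∃ t : ZMod 5, ¬ InSet70 t (b + t * u) (c + t * v) := by
  revert b c u v
  decide

theorem exists_not_inSet70_line_01v (b c v : ZMod 5) :
    ∃ t : ZMod 5, ¬ InSet70 b t (c + t * v) := by
  revert b c v
  decide

theorem exists_not_inSet70_line_001 (b c : ZMod 5) : ∃ t : ZMod 5, ¬ InSet70 b c t := by
  revert b c
  decide

theorem exists_add_smul_notMem_set70 (a d : Fin 3 → ZMod 5) (hd : d ≠ 0) :
    ∃ t : ZMod 5, a + t • d ∉ set70 := by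
  have : Fact (Nat.Prime 5) := ⟨Nat.prime_five⟩
  by_cases h0 : d 0 = 0
  · by_cases h1 : d 1 = 0
    · have h2 : d 2 ≠ 0 := fun h2 => hd (by ext i; fin_cases i <;> assumption)
      apply exists_add_smul_notMem_of_reparam (-(a 2 / d 2)) (d 2)⁻¹
      obtain ⟨t, ht⟩ := exists_not_inSet70_line_001 (a 0) (a 1)
      refine ⟨t, ?_⟩
      simp only [mem_set70, Pi.add_apply, Pi.smul_apply, smul_eq_mul, h0, h1, mul_zero,
        add_zero]
      convert ht using 2
      field_simp
      ring
    · apply exists_add_smul_notMem_of_reparam (-(a 1 / d 1)) (d 1)⁻¹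
      obtain ⟨t, ht⟩ :=
        exists_not_inSet70_line_01v (a 0) (a 2 - a 1 / d 1 * d 2) (d 2 / d 1)
      refine ⟨t, ?_⟩
      simp only [mem_set70, Pi.add_apply, Pi.smul_apply, smul_eq_mul, h0, mul_zero, add_zero]
      convert ht using 2 <;> field_simp <;> ring
  · apply exists_add_smul_notMem_of_reparam (-(a 0 / d 0)) (d 0)⁻¹
    obtain ⟨t, ht⟩ := exists_not_inSet70_line_1uv (a 1 - a 0 / d 0 * d 1)
      (a 2 - a 0 / d 0 * d 2) (d 1 / d 0) (d 2 / d 0)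
    refine ⟨t, ?_⟩
    simp only [mem_set70, Pi.add_apply, Pi.smul_apply, smul_eq_mul]
    convert ht using 2 <;> field_simp <;> ring

theorem stmt_17 :
    ∃ S : Finset (Fin 3 → ZMod 5), ProgFree 5 3 5 S ∧ S.card = 70 :=
  ⟨set70, (progFree_self_iff set70).mpr exists_add_smul_notMem_set70, card_set70⟩
end
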